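/- Let σ be a positive definite density operator on a finite-dimensional Hilbert space H and ρ' any density operator on H. Then the minimum κ ≥ 0 such that ρ' ⪯ κσ equals the maximum of Tr(Mρ') over all positive semidefinite operators M with Tr(Mσ) ≤ 1. -/

import Mathlib

open Matrix ComplexOrder

variable {n : Type*} [Fintype n] [DecidableEq n]

/-- The trace norm `‖M‖₁ = Tr √(Mᴴ M)` of a matrix. -/
noncomputable def traceNorm (M : Matrix n n ℂ) : ℝ :=
  (((Matrix.posSemidef_conjTranspose_mul_self M).1.eigenvectorUnitary : Matrix n n ℂ) *
    diagonal (((↑) : ℝ → ℂ) ∘ (√·) ∘ (Matrix.posSemidef_conjTranspose_mul_self M).1.eigenvalues) *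
    (star (Matrix.posSemidef_conjTranspose_mul_self M).1.eigenvectorUnitary : Matrix n n ℂ)).trace.re

/-- Positive semidefinite square root (junk value `0` off the PSD matrices). -/
noncomputable def msqrt (A : Matrix n n ℂ) : Matrix n n ℂ :=
  @dite _ A.PosSemidef (Classical.propDecidable _) (fun h => (h.1.eigenvectorUnitary : Matrix n n ℂ) *
    diagonal (((↑) : ℝ → ℂ) ∘ (√·) ∘ h.1.eigenvalues) * (star h.1.eigenvectorUnitary : Matrix n n ℂ)) (fun _ => 0)

/-- Fidelity `F(ρ,σ) = ‖√ρ √σ‖₁²`. -/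
noncomputable def fidelity (ρ σ : Matrix n n ℂ) : ℝ :=
  (traceNorm (msqrt ρ * msqrt σ)) ^ 2

/-- A density operator: positive semidefinite with unit trace. -/
def IsDensity (ρ : Matrix n n ℂ) : Prop := ρ.PosSemidef ∧ ρ.trace = 1

/-- The Löwner partial order `A ⪯ B`. -/
def Loewner (A B : Matrix n n ℂ) : Prop := (B - A).PosSemidef

/-- `supp ρ ⊆ supp σ`, expressed for PSD matrices as `ker σ ⊆ ker ρ`. -/
def SuppSubset (ρ σ : Matrix n n ℂ) : Prop := ∀ v, σ *ᵥ v = 0 → ρ *ᵥ v = 0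

/-- Observational divergence `D(ρ‖σ)`. -/
noncomputable def obsDiv (ρ σ : Matrix n n ℂ) : ℝ :=
  sSup { x | ∃ M : Matrix n n ℂ, M.PosSemidef ∧ (1 - M).PosSemidef ∧
    (M * σ).trace ≠ 0 ∧
    x = ((M * ρ).trace).re * Real.logb 2 (((M * ρ).trace).re / ((M * σ).trace).re) }

lemma trace_eq_sum_eigen (A : Matrix n n ℂ) (hA : A.IsHermitian) :
    A.trace = ((∑ i, hA.eigenvalues i : ℝ) : ℂ) := by
  nth_rewrite 1 [hA.spectral_theorem]
  rw [Unitary.conjStarAlgAut_apply, Matrix.trace_mul_cycle,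
    (Matrix.mem_unitaryGroup_iff').mp (hA.eigenvectorUnitary).2, one_mul, Matrix.trace_diagonal]
  push_cast
  rfl

lemma herm_shift (A : Matrix n n ℂ) (hA : A.IsHermitian) (c : ℝ) :
    (c : ℂ) • (1 : Matrix n n ℂ) - A =
      (hA.eigenvectorUnitary : Matrix n n ℂ) *
        Matrix.diagonal (fun i => ((c - hA.eigenvalues i : ℝ) : ℂ)) *
        (hA.eigenvectorUnitary : Matrix n n ℂ)ᴴ := by
  have hU : (hA.eigenvectorUnitary : Matrix n n ℂ) * (hA.eigenvectorUnitary : Matrix n n ℂ)ᴴ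
      = 1 := by
    rw [← Matrix.star_eq_conjTranspose]
    exact (Matrix.mem_unitaryGroup_iff).mp (hA.eigenvectorUnitary).2
  have hdiag : Matrix.diagonal (fun i => ((c - hA.eigenvalues i : ℝ) : ℂ)) =
      (c : ℂ) • (1 : Matrix n n ℂ) - Matrix.diagonal (RCLike.ofReal ∘ hA.eigenvalues) := by
    rw [Matrix.smul_one_eq_diagonal]
    ext i j
    by_cases h : i = j <;> simp [Matrix.diagonal_apply, h]
  rw [hdiag, Matrix.mul_sub, Matrix.sub_mul]
  congr 1
  · rw [mul_smul_comm, mul_one, Matrix.smul_mul, hU]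
  · rw [← Matrix.star_eq_conjTranspose]
    exact hA.spectral_theorem

lemma smul_one_sub_psd (A : Matrix n n ℂ) (hA : A.IsHermitian) (c : ℝ)
    (h : ∀ i, hA.eigenvalues i ≤ c) :
    ((c : ℂ) • (1 : Matrix n n ℂ) - A).PosSemidef := by
  rw [herm_shift A hA c]
  exact (Matrix.posSemidef_diagonal_iff.mpr fun i => by
    rw [Complex.nonneg_iff]; simp [sub_nonneg, h i]).mul_mul_conjTranspose_same _

lemma sub_smul_one_psd (A : Matrix n n ℂ) (hA : A.IsHermitian) (c : ℝ)
    (h : ∀ i, c ≤ hA.eigenvalues i) :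
    (A - (c : ℂ) • (1 : Matrix n n ℂ)).PosSemidef := by
  have := herm_shift A hA c
  have h2 : A - (c : ℂ) • (1 : Matrix n n ℂ) =
      (hA.eigenvectorUnitary : Matrix n n ℂ) *
        Matrix.diagonal (fun i => ((hA.eigenvalues i - c : ℝ) : ℂ)) *
        (hA.eigenvectorUnitary : Matrix n n ℂ)ᴴ := by
    rw [(neg_sub ((c : ℂ) • (1 : Matrix n n ℂ)) A).symm, herm_shift A hA c,
      ← Matrix.neg_mul, ← Matrix.mul_neg, Matrix.diagonal_neg]
    have hfun : (fun i => -((c - hA.eigenvalues i : ℝ) : ℂ)) =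
        fun i => ((hA.eigenvalues i - c : ℝ) : ℂ) := by
      funext i; push_cast; ring
    rw [hfun]
  rw [h2]
  exact (Matrix.posSemidef_diagonal_iff.mpr fun i => by
    rw [Complex.nonneg_iff]; simp [sub_nonneg, h i]).mul_mul_conjTranspose_same _

lemma psd_trace_re_nonneg (A : Matrix n n ℂ) (hA : A.PosSemidef) : 0 ≤ A.trace.re := by
  rw [trace_eq_sum_eigen A hA.1]
  simpa using Finset.sum_nonneg fun i _ => hA.eigenvalues_nonneg i

lemma psd_smul (c : ℝ) (hc : 0 ≤ c) (A : Matrix n n ℂ) (hA : A.PosSemidef) :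
    ((c : ℂ) • A).PosSemidef := by
  refine Matrix.PosSemidef.of_dotProduct_mulVec_nonneg ?_ fun x => ?_
  · unfold Matrix.IsHermitian
    rw [Matrix.conjTranspose_smul, hA.1.eq]
    simp
  · rw [Matrix.smul_mulVec, dotProduct_smul, smul_eq_mul]
    exact mul_nonneg (by rw [Complex.nonneg_iff]; simp [hc]) (hA.dotProduct_mulVec_nonneg x)

open scoped MatrixOrder in
lemma trace_mul_psd_nonneg (M B : Matrix n n ℂ) (hM : M.PosSemidef) (hB : B.PosSemidef) :
    0 ≤ ((M * B).trace).re := by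
  have h1 : M * B = CFC.sqrt M * (CFC.sqrt M * B) := by
    rw [← mul_assoc, CFC.sqrt_mul_sqrt_self M hM.nonneg]
  rw [h1, Matrix.trace_mul_comm]
  have h3 : (CFC.sqrt M * B * CFC.sqrt M).PosSemidef := by
    have := hB.mul_mul_conjTranspose_same (CFC.sqrt M)
    rwa [(CFC.sqrt_nonneg M).posSemidef.1] at this
  exact psd_trace_re_nonneg _ h3

lemma trace_vecMulVec_mul (v : n → ℂ) (A : Matrix n n ℂ) :
    (Matrix.vecMulVec v (star v) * A).trace = star v ⬝ᵥ A *ᵥ v := by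
  simp only [Matrix.trace, Matrix.diag, Matrix.mul_apply, Matrix.vecMulVec_apply,
    dotProduct, Matrix.mulVec, Pi.star_apply]
  rw [Finset.sum_comm]
  exact Finset.sum_congr rfl fun j _ => by rw [Finset.mul_sum]; exact Finset.sum_congr rfl fun i _ => by ring

lemma vecMulVec_psd (v : n → ℂ) : (Matrix.vecMulVec v (star v)).PosSemidef := by
  have : Matrix.vecMulVec v (star v) = Matrix.replicateCol (Fin 1) v * (Matrix.replicateCol (Fin 1) v)ᴴ := by
    rw [Matrix.vecMulVec_eq (Fin 1), Matrix.conjTranspose_replicateCol]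
    rfl
  rw [this]
  exact Matrix.posSemidef_self_mul_conjTranspose _

lemma loewner_re (A B : Matrix n n ℂ) (h : (B - A).PosSemidef) (x : n → ℂ) :
    (star x ⬝ᵥ A *ᵥ x).re ≤ (star x ⬝ᵥ B *ᵥ x).re := by
  have h2 := h.dotProduct_mulVec_nonneg x
  rw [Matrix.sub_mulVec, dotProduct_sub] at h2
  have h3 := (Complex.nonneg_iff.mp h2).1
  simp only [Complex.sub_re] at h3
  linarith

lemma smul_quad_re (c : ℝ) (M : Matrix n n ℂ) (x : n → ℂ) :
    (star x ⬝ᵥ ((c : ℂ) • M) *ᵥ x).re = c * (star x ⬝ᵥ M *ᵥ x).re := by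
  rw [Matrix.smul_mulVec, dotProduct_smul]
  simp [Complex.mul_re]

lemma herm_quad_im (A : Matrix n n ℂ) (hA : A.IsHermitian) (x : n → ℂ) :
    (star x ⬝ᵥ A *ᵥ x).im = 0 := by
  rw [← Complex.conj_eq_iff_im]
  have h2 : star (star x ⬝ᵥ A *ᵥ x) = star x ⬝ᵥ A *ᵥ x := by
    nth_rewrite 1 [Matrix.star_dotProduct]
    rw [star_star, Matrix.star_mulVec, ← Matrix.dotProduct_mulVec, hA.eq]
  exact h2

lemma psd_of_quad (A : Matrix n n ℂ) (hA : A.IsHermitian)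
    (h : ∀ x, 0 ≤ (star x ⬝ᵥ A *ᵥ x).re) : A.PosSemidef := by
  refine Matrix.PosSemidef.of_dotProduct_mulVec_nonneg hA fun x => ?_
  rw [Complex.nonneg_iff]
  exact ⟨h x, (herm_quad_im A hA x).symm⟩

lemma eig_le_one (A : Matrix n n ℂ) (hA : A.PosSemidef) (h1 : A.trace = 1) (i : n) :
    hA.1.eigenvalues i ≤ 1 := by
  have hsum : (∑ j, hA.1.eigenvalues j : ℝ) = 1 := by
    have h2 := trace_eq_sum_eigen A hA.1
    rw [h1] at h2
    exact_mod_cast h2.symm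
  calc hA.1.eigenvalues i ≤ ∑ j, hA.1.eigenvalues j :=
        Finset.single_le_sum (fun j _ => hA.eigenvalues_nonneg j) (Finset.mem_univ i)
    _ = 1 := hsum

theorem stmt6 (ρ' σ : Matrix n n ℂ) (hρ' : IsDensity ρ') (hσd : IsDensity σ)
    (hσ : σ.PosDef) :
    ∃ κ : ℝ, IsLeast {κ : ℝ | 0 ≤ κ ∧ Loewner ρ' ((κ : ℂ) • σ)} κ ∧
      IsGreatest {x : ℝ | ∃ M : Matrix n n ℂ, M.PosSemidef ∧
        ((M * σ).trace).re ≤ 1 ∧ x = ((M * ρ').trace).re} κ := by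
  obtain ⟨hρp, hρt⟩ := hρ'
  obtain ⟨hσp, hσt⟩ := hσd
  haveI hne : Nonempty n := by
    by_contra h
    rw [not_nonempty_iff] at h
    simp [Matrix.trace] at hσt
  set S : Set ℝ := {κ : ℝ | 0 ≤ κ ∧ Loewner ρ' ((κ : ℂ) • σ)} with hSdef
  -- membership characterization
  have hmem : ∀ κ : ℝ, κ ∈ S ↔ (0 ≤ κ ∧ ∀ x : n → ℂ,
      (star x ⬝ᵥ ρ' *ᵥ x).re ≤ κ * (star x ⬝ᵥ σ *ᵥ x).re) := by
    intro κ
    constructor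
    · rintro ⟨hκ, hL⟩
      refine ⟨hκ, fun x => ?_⟩
      have h1 := loewner_re ρ' ((κ : ℂ) • σ) hL x
      rwa [smul_quad_re] at h1
    · rintro ⟨hκ, hx⟩
      refine ⟨hκ, ?_⟩
      have herm : ((κ : ℂ) • σ - ρ').IsHermitian := by
        have : ((κ : ℂ) • σ - ρ')ᴴ = (κ : ℂ) • σ - ρ' := by
          rw [Matrix.conjTranspose_sub, Matrix.conjTranspose_smul, hσp.1.eq, hρp.1.eq]
          simp [RCLike.star_def, Complex.conj_ofReal]
        exact this
      refine psd_of_quad _ herm fun x => ?_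
      rw [Matrix.sub_mulVec, dotProduct_sub]
      simp only [Complex.sub_re]
      have h2 := hx x
      rw [← smul_quad_re κ σ x] at h2
      linarith
  have hbdd : BddBelow S := ⟨0, fun κ hκ => hκ.1⟩
  -- nonemptiness of S
  have hSne : S.Nonempty := by
    set ε : ℝ := Finset.univ.inf' Finset.univ_nonempty hσp.1.eigenvalues with hεdef
    have hεpos : 0 < ε := by
      rw [hεdef, Finset.lt_inf'_iff]
      exact fun i _ => hσ.eigenvalues_pos i
    have hεσ : (σ - (ε : ℂ) • 1).PosSemidef :=
      sub_smul_one_psd σ hσp.1 ε fun i => Finset.inf'_le _ (Finset.mem_univ i)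
    have hρUB : (((1 : ℝ) : ℂ) • 1 - ρ').PosSemidef :=
      smul_one_sub_psd ρ' hρp.1 1 (eig_le_one ρ' hρp hρt)
    refine ⟨ε⁻¹, (hmem _).mpr ⟨by positivity, fun x => ?_⟩⟩
    have h1 := loewner_re ((ε : ℂ) • 1) σ hεσ x
    rw [smul_quad_re] at h1
    have h2 := loewner_re ρ' (((1 : ℝ) : ℂ) • 1) hρUB x
    rw [smul_quad_re] at h2
    have h3 : (star x ⬝ᵥ (1 : Matrix n n ℂ) *ᵥ x).re = (star x ⬝ᵥ x).re := by
      rw [Matrix.one_mulVec]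
    rw [h3] at h1 h2
    have h4 : (star x ⬝ᵥ x).re ≤ ε⁻¹ * (star x ⬝ᵥ σ *ᵥ x).re := by
      have := mul_le_mul_of_nonneg_left h1 (inv_nonneg.mpr hεpos.le)
      rwa [← mul_assoc, inv_mul_cancel₀ hεpos.ne', one_mul] at this
    linarith
  have hclosed : IsClosed S := by
    have hSeq : S = Set.Ici (0 : ℝ) ∩ ⋂ x : n → ℂ,
        {κ : ℝ | (star x ⬝ᵥ ρ' *ᵥ x).re ≤ κ * (star x ⬝ᵥ σ *ᵥ x).re} := by
      ext κ
      rw [Set.mem_inter_iff, Set.mem_iInter, hmem κ]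
      simp [Set.mem_Ici]
    rw [hSeq]
    exact isClosed_Ici.inter (isClosed_iInter fun x =>
      isClosed_le continuous_const (continuous_id.mul continuous_const))
  set κ : ℝ := sInf S with hκdef
  have hκS : κ ∈ S := hclosed.csInf_mem hSne hbdd
  have hκ0 : 0 ≤ κ := hκS.1
  have hB : ((κ : ℂ) • σ - ρ').PosSemidef := hκS.2
  refine ⟨κ, ⟨hκS, fun y hy => csInf_le hbdd hy⟩, ?_, ?_⟩
  · -- membership in dual set
    have hvex : ∃ v, v ≠ 0 ∧ ((κ : ℂ) • σ - ρ') *ᵥ v = 0 := by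
      by_contra hcon
      push_neg at hcon
      have hBpd : ((κ : ℂ) • σ - ρ').PosDef := by
        refine Matrix.PosDef.of_dotProduct_mulVec_pos hB.1 fun x hx => ?_
        rcases lt_or_eq_of_le (hB.dotProduct_mulVec_nonneg x) with h | h
        · exact h
        · exact absurd ((hB.dotProduct_mulVec_zero_iff x).mp h.symm) (hcon x hx)
      set δ : ℝ := Finset.univ.inf' Finset.univ_nonempty hB.1.eigenvalues with hδdef
      have hδpos : 0 < δ := by
        rw [hδdef, Finset.lt_inf'_iff]
        exact fun i _ => hBpd.eigenvalues_pos i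
      have hBδ : (((κ : ℂ) • σ - ρ') - (δ : ℂ) • 1).PosSemidef :=
        sub_smul_one_psd _ hB.1 δ fun i => Finset.inf'_le _ (Finset.mem_univ i)
      have hσUB : (((1 : ℝ) : ℂ) • 1 - σ).PosSemidef :=
        smul_one_sub_psd σ hσp.1 1 (eig_le_one σ hσp hσt)
      have hdecomp : ((κ - δ : ℝ) : ℂ) • σ - ρ' =
          (((κ : ℂ) • σ - ρ') - (δ : ℂ) • 1) + (δ : ℂ) • (((1 : ℝ) : ℂ) • 1 - σ) := by
        rw [Complex.ofReal_sub, sub_smul, Complex.ofReal_one, one_smul, smul_sub]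
        abel
      have hpsd2 : (((κ - δ : ℝ) : ℂ) • σ - ρ').PosSemidef := by
        rw [hdecomp]
        exact hBδ.add (psd_smul δ hδpos.le _ hσUB)
      have htr2 : 0 ≤ (κ - δ) - 1 := by
        have h5 := psd_trace_re_nonneg _ hpsd2
        rw [Matrix.trace_sub, Matrix.trace_smul, hσt, hρt] at h5
        simpa using h5
      have hle : κ ≤ κ - δ := csInf_le hbdd ⟨by linarith, hpsd2⟩
      linarith
    obtain ⟨v, hv0, hBv⟩ := hvex
    have hEig : star v ⬝ᵥ ρ' *ᵥ v = (κ : ℂ) * (star v ⬝ᵥ σ *ᵥ v) := by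
      rw [Matrix.sub_mulVec, sub_eq_zero, Matrix.smul_mulVec] at hBv
      rw [← hBv, dotProduct_smul, smul_eq_mul]
    have ht : (0 : ℂ) < star v ⬝ᵥ σ *ᵥ v := hσ.dotProduct_mulVec_pos hv0
    have htre : 0 < (star v ⬝ᵥ σ *ᵥ v).re := (Complex.pos_iff.mp ht).1
    set c : ℝ := ((star v ⬝ᵥ σ *ᵥ v).re)⁻¹ with hcdef
    refine ⟨(c : ℂ) • Matrix.vecMulVec v (star v),
      psd_smul c (inv_nonneg.mpr htre.le) _ (vecMulVec_psd v), ?_, ?_⟩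
    · rw [Matrix.smul_mul, Matrix.trace_smul, trace_vecMulVec_mul]
      simp only [smul_eq_mul, Complex.mul_re, Complex.ofReal_re, Complex.ofReal_im, zero_mul,
        sub_zero]
      rw [hcdef, inv_mul_cancel₀ htre.ne']
    · rw [Matrix.smul_mul, Matrix.trace_smul, trace_vecMulVec_mul, hEig]
      simp only [smul_eq_mul, Complex.mul_re, Complex.ofReal_re, Complex.ofReal_im, zero_mul,
        sub_zero, Complex.mul_im]
      rw [hcdef]
      field_simp
  · -- upper bound
    rintro x ⟨M, hM, hMσ, rfl⟩
    have h0 := trace_mul_psd_nonneg M _ hM hB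
    have hexp : (M * ((κ : ℂ) • σ - ρ')).trace = (κ : ℂ) * (M * σ).trace - (M * ρ').trace := by
      rw [Matrix.mul_sub, Matrix.mul_smul, Matrix.trace_sub, Matrix.trace_smul, smul_eq_mul]
    rw [hexp] at h0
    simp only [Complex.sub_re, Complex.mul_re, Complex.ofReal_re, Complex.ofReal_im, zero_mul,
      sub_zero] at h0
    have h6 : κ * (M * σ).trace.re ≤ κ * 1 := mul_le_mul_of_nonneg_left hMσ hκ0
    linarith
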